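/- Let V be a vector space over F_q (q odd) with a nondegenerate symmetric bilinear form, let ⟨a⟩ be a nondegenerate 1-dimensional subspace and l a 2-dimensional subspace with a ∉ l, such that the 3-dimensional subspace ⟨a, l⟩ is degenerate with 1-dimensional radical not in l, and suppose ⟨a,l⟩/rad is elliptic. Then every complement of the radical in ⟨a, l⟩ through a that meets l gives an elliptic line; in particular there exist at least q elliptic 2-dimensional subspaces through ⟨a⟩ meeting l in a 1-dimensional subspace. -/

import Mathlib

open Module

/-- The radical of a subspace `W` with respect to a bilinear form `B`:
`rad(W) = W ∩ W^⊥`. -/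
def bilinRadical {F V : Type*} [Field F] [AddCommGroup V] [Module F V]
    (B : LinearMap.BilinForm F V) (W : Submodule F V) : Submodule F V :=
  W ⊓ B.orthogonal W

/-- A subspace `W` is an *elliptic line* for `B` if it is 2-dimensional,
nondegenerate and anisotropic. -/
def IsEllipticLine {F V : Type*} [Field F] [AddCommGroup V] [Module F V]
    (B : LinearMap.BilinForm F V) (W : Submodule F V) : Prop :=
  finrank F W = 2 ∧ (B.restrict W).Nondegenerate ∧ ∀ v ∈ W, B v v = 0 → v = 0

/-- Over `F_q` (`q` odd): let `⟨a⟩` be a nondegenerate point and `l` a 2-dimensional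
subspace with `a ∉ l` such that the 3-space `⟨a,l⟩` is degenerate with 1-dimensional
radical not contained in `l`, and with elliptic quotient modulo the radical (the only
isotropic vectors of `⟨a,l⟩` lie in the radical).  Then every 2-dimensional subspace
of `⟨a,l⟩` through `a` avoiding the radical is an elliptic line, and there are at
least `q` elliptic lines through `⟨a⟩` meeting `l` in a 1-dimensional subspace. -/
theorem elliptic_lines_through_point_in_degenerate_three_space
    {F V : Type*} [Field F] [Fintype F] [AddCommGroup V] [Module F V]
    (q : ℕ) (hq : Fintype.card F = q) (hodd : Odd q)
    (B : LinearMap.BilinForm F V) (hsymm : B.IsSymm) (hB : B.Nondegenerate)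
    (a : V) (ha : B a a ≠ 0)
    (l : Submodule F V) (hl2 : finrank F l = 2) (hal : a ∉ l)
    (h3 : finrank F (Submodule.span F {a} ⊔ l : Submodule F V) = 3)
    (hdeg : ¬ (B.restrict (Submodule.span F {a} ⊔ l)).Nondegenerate)
    (hrad1 : finrank F (bilinRadical B (Submodule.span F {a} ⊔ l)) = 1)
    (hradl : ¬ bilinRadical B (Submodule.span F {a} ⊔ l) ≤ l)
    (hell : ∀ v ∈ (Submodule.span F {a} ⊔ l : Submodule F V), B v v = 0 →
      v ∈ bilinRadical B (Submodule.span F {a} ⊔ l)) :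
    (∀ m : Submodule F V, a ∈ m → finrank F m = 2 →
      m ≤ Submodule.span F {a} ⊔ l →
      bilinRadical B (Submodule.span F {a} ⊔ l) ⊓ m = ⊥ →
      IsEllipticLine B m) ∧
    q ≤ Set.ncard {m : Submodule F V | a ∈ m ∧ IsEllipticLine B m ∧
      finrank F (m ⊓ l : Submodule F V) = 1} := by
  set W : Submodule F V := Submodule.span F {a} ⊔ l with hW
  set R : Submodule F V := bilinRadical B W with hR
  -- Part 1
  have part1 : ∀ m : Submodule F V, a ∈ m → finrank F m = 2 → m ≤ W →
      R ⊓ m = ⊥ → IsEllipticLine B m := by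
    intro m ham hm2 hmW hRm
    have aniso : ∀ v ∈ m, B v v = 0 → v = 0 := by
      intro v hv hbv
      have hvR : v ∈ R := hell v (hmW hv) hbv
      have : v ∈ R ⊓ m := ⟨hvR, hv⟩
      rw [hRm] at this
      simpa using this
    refine ⟨hm2, ?_, aniso⟩
    refine ⟨?_, ?_⟩ <;> intro v hv <;>
    · have h0 : B (v : V) (v : V) = 0 := hv v
      have := aniso v v.2 h0
      exact Subtype.ext this
  refine ⟨part1, ?_⟩
  -- get generator r of R
  have hRfd : FiniteDimensional F R := Module.finite_of_finrank_eq_succ hrad1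
  have hRne : R ≠ ⊥ := by
    intro h
    rw [h] at hrad1
    simp at hrad1
  obtain ⟨r, hrR, hr0⟩ := Submodule.exists_mem_ne_zero_of_ne_bot hRne
  have hRspan : R = Submodule.span F {r} := by
    apply (Submodule.eq_of_le_of_finrank_le (Submodule.span_le.2 (by simpa using hrR)) ?_).symm
    rw [hrad1, finrank_span_singleton hr0]
  have hrW : r ∈ W := hrR.1
  have hrl : r ∉ l := by
    intro h
    exact hradl (hRspan ▸ Submodule.span_le.2 (by simpa using h))
  have hrorth : ∀ w ∈ W, B w r = 0 := by
    intro w hw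
    exact hrR.2 w hw
  -- write r = c • a + y
  obtain ⟨u, hu, y, hyl, huy⟩ := Submodule.mem_sup.1 hrW
  obtain ⟨c, rfl⟩ := Submodule.mem_span_singleton.1 hu
  have haW : a ∈ W := le_sup_left (α := Submodule F V) (Submodule.mem_span_singleton_self a)
  have hlW : l ≤ W := le_sup_right
  have hy0 : y ≠ 0 := by
    rintro rfl
    have hc : c ≠ 0 := by rintro rfl; simp at huy; exact hr0 huy.symm
    have := hrorth a haW
    rw [← huy] at this
    simp only [map_smul, add_zero] at this
    exact ha ((smul_eq_zero.1 this).resolve_left hc)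
  -- choose b ∈ l, b ∉ span y
  have hbex : ∃ b ∈ l, b ∉ Submodule.span F {y} := by
    by_contra h
    push_neg at h
    have hle : l ≤ Submodule.span F {y} := fun x hx => h x hx
    have := Submodule.finrank_mono (R := F) hle
    rw [hl2, finrank_span_singleton hy0] at this
    omega
  obtain ⟨b, hbl, hby⟩ := hbex
  have hb0 : b ≠ 0 := fun h => hby (h ▸ Submodule.zero_mem _)
  -- generic lemma about lines span{a} ⊔ span{x}
  have key : ∀ x ∈ l, x ≠ 0 → x ∉ Submodule.span F {y} →
      a ∈ (Submodule.span F {a} ⊔ Submodule.span F {x} : Submodule F V) ∧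
      IsEllipticLine B (Submodule.span F {a} ⊔ Submodule.span F {x}) ∧
      ((Submodule.span F {a} ⊔ Submodule.span F {x}) ⊓ l : Submodule F V) =
        Submodule.span F {x} := by
    intro x hxl hx0 hxy
    set m : Submodule F V := Submodule.span F {a} ⊔ Submodule.span F {x} with hm
    have ham : a ∈ m := le_sup_left (α := Submodule F V) (Submodule.mem_span_singleton_self a)
    have hmW : m ≤ W := sup_le_sup_right (le_refl _) l |>.trans (le_refl W) |> fun _ => by
      exact sup_le le_sup_left ((Submodule.span_le.2 (by simpa using hxl)).trans hlW)
    have hml : m ⊓ l = Submodule.span F {x} := by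
      apply le_antisymm
      · rintro v ⟨hvm, hvl⟩
        obtain ⟨u1, hu1, u2, hu2, rfl⟩ := Submodule.mem_sup.1 hvm
        obtain ⟨c1, rfl⟩ := Submodule.mem_span_singleton.1 hu1
        obtain ⟨c2, rfl⟩ := Submodule.mem_span_singleton.1 hu2
        have hc1 : c1 = 0 := by
          by_contra hc1
          apply hal
          have : c1 • a = (c1 • a + c2 • x) - c2 • x := by abel
          have hmem : c1 • a ∈ l := this ▸ Submodule.sub_mem _ hvl
            (Submodule.smul_mem _ _ hxl)
          have := Submodule.smul_mem l c1⁻¹ hmem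
          rwa [smul_smul, inv_mul_cancel₀ hc1, one_smul] at this
        rw [hc1, zero_smul, zero_add]
        exact Submodule.smul_mem _ _ (Submodule.mem_span_singleton_self x)
      · exact le_inf le_sup_right (Submodule.span_le.2 (by simpa using hxl))
    have hrm : r ∉ m := by
      intro hrm
      have : y ∈ m := by
        have : y = r - c • a := by rw [← huy]; abel
        rw [this]
        exact Submodule.sub_mem _ hrm (Submodule.smul_mem _ _ ham)
      have hyx : y ∈ Submodule.span F {x} := hml ▸ (⟨this, hyl⟩ : y ∈ m ⊓ l)
      obtain ⟨d, rfl⟩ := Submodule.mem_span_singleton.1 hyx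
      have hd : d ≠ 0 := by rintro rfl; simp at hy0
      apply hxy
      rw [Submodule.mem_span_singleton]
      exact ⟨d⁻¹, by rw [smul_smul, inv_mul_cancel₀ hd, one_smul]⟩
    have hRm : R ⊓ m = ⊥ := by
      rw [Submodule.eq_bot_iff]
      intro v hv
      obtain ⟨hvR, hvm⟩ := Submodule.mem_inf.1 hv
      rw [hRspan] at hvR
      obtain ⟨e, rfl⟩ := Submodule.mem_span_singleton.1 hvR
      rcases eq_or_ne e 0 with rfl | he
      · simp
      · exfalso
        apply hrm
        have := Submodule.smul_mem m e⁻¹ hvm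
        rwa [smul_smul, inv_mul_cancel₀ he, one_smul] at this
    have hm2 : finrank F m = 2 := by
      have hinf : Submodule.span F {a} ⊓ Submodule.span F {x} = ⊥ := by
        rw [Submodule.eq_bot_iff]
        rintro v ⟨hva, hvx⟩
        obtain ⟨c1, rfl⟩ := Submodule.mem_span_singleton.1 hva
        rcases eq_or_ne c1 0 with rfl | hc1
        · simp
        · exfalso
          obtain ⟨c2, hc2⟩ := Submodule.mem_span_singleton.1 hvx
          apply hal
          have : a = (c1⁻¹ * c2) • x := by
            rw [mul_smul, hc2, smul_smul, inv_mul_cancel₀ hc1, one_smul]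
          rw [this]
          exact Submodule.smul_mem _ _ hxl
      have := Submodule.finrank_sup_add_finrank_inf_eq (Submodule.span F {a})
        (Submodule.span F {x})
      rw [hinf, finrank_span_singleton (fun h => ha (by simp [h])),
        finrank_span_singleton hx0] at this
      simpa using this
    exact ⟨ham, part1 m ham hm2 hmW hRm, hml⟩
  -- the family of lines
  set f : F → Submodule F V := fun t => Submodule.span F {a} ⊔ Submodule.span F {b + t • y}
    with hf
  have hxt : ∀ t : F, b + t • y ∈ l ∧ b + t • y ≠ 0 ∧ b + t • y ∉ Submodule.span F {y} := by
    intro t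
    refine ⟨Submodule.add_mem _ hbl (Submodule.smul_mem _ _ hyl), ?_, ?_⟩
    · intro h
      apply hby
      have : b = -(t • y) := by linear_combination (norm := abel) h
      rw [this]
      exact Submodule.neg_mem _ (Submodule.smul_mem _ _ (Submodule.mem_span_singleton_self y))
    · intro h
      apply hby
      have : b = (b + t • y) - t • y := by abel
      rw [this]
      exact Submodule.sub_mem _ h (Submodule.smul_mem _ _ (Submodule.mem_span_singleton_self y))
  set T : Set (Submodule F V) := {m : Submodule F V | a ∈ m ∧ IsEllipticLine B m ∧
      finrank F (m ⊓ l : Submodule F V) = 1} with hT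
  have hfT : ∀ t, f t ∈ T := by
    intro t
    obtain ⟨h1, h2, h3⟩ := hxt t
    obtain ⟨ham, hell', hml⟩ := key _ h1 h2 h3
    exact ⟨ham, hell', by rw [hml, finrank_span_singleton h2]⟩
  have hfinj : Function.Injective f := by
    intro t s hts
    have h1 := (key _ (hxt t).1 (hxt t).2.1 (hxt t).2.2).2.2
    have h2 := (key _ (hxt s).1 (hxt s).2.1 (hxt s).2.2).2.2
    rw [hf] at hts
    simp only at hts
    rw [hts, h2] at h1
    have : b + s • y ∈ Submodule.span F {b + t • y} := h1 ▸
      Submodule.mem_span_singleton_self _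
    obtain ⟨d, hd⟩ := Submodule.mem_span_singleton.1 this
    -- d • (b + t•y) = b + s•y
    have hd1 : d = 1 := by
      by_contra hd1
      apply hby
      have : (d - 1) • b = (s - d * t) • y := by
        have := hd
        rw [smul_add, smul_smul] at this
        linear_combination (norm := module) this
      have hsub : d - 1 ≠ 0 := sub_ne_zero.2 hd1
      rw [Submodule.mem_span_singleton]
      refine ⟨(d - 1)⁻¹ * (s - d * t), ?_⟩
      rw [mul_smul, ← this, smul_smul, inv_mul_cancel₀ hsub, one_smul]
    rw [hd1, one_smul] at hd
    have : (t - s) • y = 0 := by linear_combination (norm := module) hd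
    exact sub_eq_zero.1 ((smul_eq_zero.1 this).resolve_right hy0)
  -- finiteness of T
  have hlfd : FiniteDimensional F l := Module.finite_of_finrank_eq_succ hl2
  have hlfin : Finite l := Module.finite_of_finite F
  have hTfin : T.Finite := by
    have hsub : T ⊆ Set.range (fun x : l => Submodule.span F {a} ⊔ Submodule.span F {(x : V)}) := by
      rintro m ⟨ham, ⟨hm2, _, _⟩, hml1⟩
      have : (m ⊓ l : Submodule F V) ≠ ⊥ := by
        intro h
        rw [h] at hml1
        simp at hml1
      obtain ⟨x, hx, hx0⟩ := Submodule.exists_mem_ne_zero_of_ne_bot this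
      refine ⟨⟨x, hx.2⟩, ?_⟩
      simp only
      have hle : Submodule.span F {a} ⊔ Submodule.span F {x} ≤ m :=
        sup_le (Submodule.span_le.2 (by simpa using ham))
          (Submodule.span_le.2 (by simpa using hx.1))
      haveI : FiniteDimensional F m := Module.finite_of_finrank_eq_succ hm2
      apply Submodule.eq_of_le_of_finrank_le hle
      · rw [hm2]
        have hinf : Submodule.span F {a} ⊓ Submodule.span F {x} = ⊥ := by
          rw [Submodule.eq_bot_iff]
          rintro v ⟨hva, hvx⟩
          obtain ⟨c1, rfl⟩ := Submodule.mem_span_singleton.1 hva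
          rcases eq_or_ne c1 0 with rfl | hc1
          · simp
          · exfalso
            obtain ⟨c2, hc2⟩ := Submodule.mem_span_singleton.1 hvx
            apply hal
            have : a = (c1⁻¹ * c2) • x := by
              rw [mul_smul, hc2, smul_smul, inv_mul_cancel₀ hc1, one_smul]
            rw [this]
            exact Submodule.smul_mem _ _ hx.2
        have := Submodule.finrank_sup_add_finrank_inf_eq (Submodule.span F {a})
          (Submodule.span F {x})
        rw [hinf, finrank_span_singleton (fun h => ha (by simp [h])),
          finrank_span_singleton hx0] at this
        simp only [finrank_bot] at this
        omega
    exact Set.Finite.subset (Set.finite_range _) hsub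
  -- conclude
  have hrange : Set.range f ⊆ T := Set.range_subset_iff.2 hfT
  have hcard : (Set.range f).ncard = q := by
    rw [← Set.image_univ, Set.ncard_image_of_injective _ hfinj, Set.ncard_univ,
      Nat.card_eq_fintype_card, hq]
  calc q = (Set.range f).ncard := hcard.symm
    _ ≤ T.ncard := Set.ncard_le_ncard hrange hTfin
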